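/- arXiv:2306.17348 — 3 statements merged into one kernel-verified Lean document; each statement's English description precedes it below -/
import Mathlib

section
/- For a rooted binary tree with n leaves and a leaf-additive quality measure f computable in constant time per evaluation, the minimum over all planar embeddings of the total cost Σ_ℓ f(ℓ, π(ℓ)) can be computed in O(n²) time by dynamic programming. -/
/-- A rooted binary tree with ℕ-labeled leaves. -/
inductive BT where
  | leaf : ℕ → BT
  | node : BT → BT → BT

/-- Left-to-right list of leaf labels (in some fixed reference embedding). -/
def leavesList : BT → List ℕ
  | .leaf l => [l]
  | .node a b => leavesList a ++ leavesList b

/-- Number of leaves. -/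
def numLeaves (t : BT) : ℕ := (leavesList t).length

/-- The set of left-to-right leaf orders obtainable from planar embeddings of `t`
(choosing, at each internal vertex, which child is left and which is right). -/
def orders : BT → Finset (List ℕ)
  | .leaf l => {[l]}
  | .node a b =>
      ((orders a) ×ˢ (orders b)).image (fun p => p.1 ++ p.2) ∪
      ((orders a) ×ˢ (orders b)).image (fun p => p.2 ++ p.1)

/-- Total leaf-additive cost of placing the leaf order `L` with its leftmost leaf at
position `i`. -/
noncomputable def placedCost (f : ℕ → ℕ → ℝ) (L : List ℕ) (i : ℕ) : ℝ :=
  ∑ j ∈ Finset.range L.length, f (L.getD j 0) (i + j)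

/-- The recurrence-based dynamic program for leaf-additive cost minimization. -/
noncomputable def DP (f : ℕ → ℕ → ℝ) : BT → ℕ → ℝ
  | .leaf l, i => f l i
  | .node a b, i =>
      min (DP f a i + DP f b (i + numLeaves a)) (DP f b i + DP f a (i + numLeaves b))

lemma orders_nonempty (t : BT) : (orders t).Nonempty := by
  induction t with
  | leaf l => exact ⟨[l], Finset.mem_singleton_self _⟩
  | node a b ha hb =>
    obtain ⟨La, hLa⟩ := ha
    obtain ⟨Lb, hLb⟩ := hb
    exact ⟨La ++ Lb, Finset.mem_union_left _ (Finset.mem_image.2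
      ⟨(La, Lb), Finset.mem_product.2 ⟨hLa, hLb⟩, rfl⟩)⟩

lemma length_of_mem_orders {t : BT} {L : List ℕ} (h : L ∈ orders t) :
    L.length = numLeaves t := by
  induction t generalizing L with
  | leaf l =>
    simp only [orders, Finset.mem_singleton] at h
    subst h; rfl
  | node a b ha hb =>
    simp only [orders, Finset.mem_union, Finset.mem_image, Finset.mem_product] at h
    have hn : numLeaves (BT.node a b) = numLeaves a + numLeaves b := by
      simp [numLeaves, leavesList]
    rcases h with ⟨p, ⟨h1, h2⟩, rfl⟩ | ⟨p, ⟨h1, h2⟩, rfl⟩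
    · simp [List.length_append, ha h1, hb h2, hn]
    · simp only [List.length_append, ha h1, hb h2, hn]; ring

lemma placedCost_append (f : ℕ → ℕ → ℝ) (L1 L2 : List ℕ) (i : ℕ) :
    placedCost f (L1 ++ L2) i = placedCost f L1 i + placedCost f L2 (i + L1.length) := by
  unfold placedCost
  rw [List.length_append, Finset.sum_range_add]
  congr 1
  · apply Finset.sum_congr rfl
    intro j hj
    rw [Finset.mem_range] at hj
    rw [List.getD_append _ _ _ _ hj]
  · apply Finset.sum_congr rfl
    intro j _
    have hg : (L1 ++ L2).getD (L1.length + j) 0 = L2.getD j 0 := by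
      rw [List.getD_append_right]
      · simp
      · omega
    rw [hg]
    congr 1
    omega

lemma inf'_prod_add {A B : Finset (List ℕ)} (hA : A.Nonempty) (hB : B.Nonempty)
    (g h : List ℕ → ℝ) :
    (A ×ˢ B).inf' (hA.product hB) (fun p => g p.1 + h p.2) =
      A.inf' hA g + B.inf' hB h := by
  apply le_antisymm
  · obtain ⟨a0, ha0, hga⟩ :=
      (Finset.exists_mem_eq_inf' hA g : ∃ a, a ∈ A ∧ A.inf' hA g = g a)
    obtain ⟨b0, hb0, hgb⟩ :=
      (Finset.exists_mem_eq_inf' hB h : ∃ b, b ∈ B ∧ B.inf' hB h = h b)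
    rw [hga, hgb]
    exact Finset.inf'_le (fun p : List ℕ × List ℕ => g p.1 + h p.2)
      (Finset.mk_mem_product ha0 hb0)
  · apply Finset.le_inf'
    intro p hp
    rw [Finset.mem_product] at hp
    exact add_le_add (Finset.inf'_le _ hp.1) (Finset.inf'_le _ hp.2)

lemma DP_eq (f : ℕ → ℕ → ℝ) (t : BT) (i : ℕ) :
    DP f t i = (orders t).inf' (orders_nonempty t) (fun L => placedCost f L i) := by
  induction t generalizing i with
  | leaf l =>
    simp [DP, orders, placedCost]
  | node a b ha hb =>
    have hne : ((orders a) ×ˢ (orders b)).Nonempty :=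
      (orders_nonempty a).product (orders_nonempty b)
    have e1 : ((orders a) ×ˢ (orders b)).inf' hne
        ((fun L => placedCost f L i) ∘ fun p : List ℕ × List ℕ => p.1 ++ p.2) =
        DP f a i + DP f b (i + numLeaves a) := by
      have hfg : ∀ p ∈ (orders a) ×ˢ (orders b),
          ((fun L => placedCost f L i) ∘ fun p : List ℕ × List ℕ => p.1 ++ p.2) p =
          (fun p : List ℕ × List ℕ =>
            placedCost f p.1 i + placedCost f p.2 (i + numLeaves a)) p := by
        intro p hp
        rw [Finset.mem_product] at hp
        show placedCost f (p.1 ++ p.2) i = _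
        rw [placedCost_append, length_of_mem_orders hp.1]
      rw [Finset.inf'_congr hne rfl hfg, ha, hb]
      exact inf'_prod_add (orders_nonempty a) (orders_nonempty b)
        (fun L => placedCost f L i) (fun L => placedCost f L (i + numLeaves a))
    have e2 : ((orders a) ×ˢ (orders b)).inf' hne
        ((fun L => placedCost f L i) ∘ fun p : List ℕ × List ℕ => p.2 ++ p.1) =
        DP f b i + DP f a (i + numLeaves b) := by
      have hfg : ∀ p ∈ (orders a) ×ˢ (orders b),
          ((fun L => placedCost f L i) ∘ fun p : List ℕ × List ℕ => p.2 ++ p.1) p =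
          (fun p : List ℕ × List ℕ =>
            placedCost f p.1 (i + numLeaves b) + placedCost f p.2 i) p := by
        intro p hp
        rw [Finset.mem_product] at hp
        show placedCost f (p.2 ++ p.1) i = _
        rw [placedCost_append, length_of_mem_orders hp.2, add_comm]
      rw [Finset.inf'_congr hne rfl hfg, add_comm (DP f b i), ha, hb]
      exact inf'_prod_add (orders_nonempty a) (orders_nonempty b)
        (fun L => placedCost f L (i + numLeaves b)) (fun L => placedCost f L i)
    have key : (orders (BT.node a b)).inf' (orders_nonempty _) (fun L => placedCost f L i)
        = min ((((orders a) ×ˢ (orders b)).image (fun p => p.1 ++ p.2)).inf' (hne.image _)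
            (fun L => placedCost f L i))
          ((((orders a) ×ˢ (orders b)).image (fun p => p.2 ++ p.1)).inf' (hne.image _)
            (fun L => placedCost f L i)) :=
      Finset.inf'_union _ _ _
    show min (DP f a i + DP f b (i + numLeaves a)) (DP f b i + DP f a (i + numLeaves b)) = _
    rw [key, Finset.inf'_image, Finset.inf'_image]
    exact (congrArg₂ min e1 e2).symm

/-- correctness of the `O(n²)` dynamic program: for a rooted binary tree `t`
and a leaf-additive quality measure `f`, the DP value equals the true minimum, over all
planar embeddings (leaf orders `L ∈ orders t`, placed at positions `1,…,n`), of the total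
cost `Σ_ℓ f(ℓ, π(ℓ))`. -/
theorem DP_correct (f : ℕ → ℕ → ℝ) (t : BT) :
    DP f t 1 = sInf {c : ℝ | ∃ L ∈ orders t, c = placedCost f L 1} := by
  have hset : {c : ℝ | ∃ L ∈ orders t, c = placedCost f L 1} =
      (fun L => placedCost f L 1) '' ↑(orders t) := by
    ext c
    simp [eq_comm]
  rw [hset, ← Finset.inf'_eq_csInf_image (orders t) (orders_nonempty t), DP_eq]
end

section
/- Let p_i and p_j be two sites with y_i ≠ y_j, connected by po-leaders (a horizontal segment at the site followed by a vertical segment to the leaf position on the top boundary). If neither site lies in the axis-aligned rectangle spanning horizontally from position 1 to position n and vertically from the other site up to the top of the map, then their po-leaders cross if and only if the relative left-to-right order of their leaf positions disagrees with a fixed order determined only by the sites, independent of the exact leaf positions. -/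
/-- The po-leader from site `p` to the leaf position with x-coordinate `a` on the top
boundary at height `h`: a horizontal segment at the site's height followed by a vertical
segment up to the top boundary. -/
def poLeader (p : ℝ × ℝ) (a h : ℝ) : Set (ℝ × ℝ) :=
  segment ℝ p (a, p.2) ∪ segment ℝ (a, p.2) (a, h)

/-- The po-area of a site `p`: the axis-aligned rectangle spanning horizontally from
position `1` (x-coordinate `x1`) to position `n` (x-coordinate `xn`) and vertically from
`p` up to the top of the map at height `h`. -/
def poArea (p : ℝ × ℝ) (x1 xn h : ℝ) : Set (ℝ × ℝ) :=
  {q | x1 ≤ q.1 ∧ q.1 ≤ xn ∧ p.2 ≤ q.2 ∧ q.2 ≤ h}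

lemma mem_segment_horiz {x₁ x₂ y : ℝ} {r : ℝ × ℝ} :
    r ∈ segment ℝ (x₁, y) (x₂, y) ↔ r.1 ∈ Set.uIcc x₁ x₂ ∧ r.2 = y := by
  rw [← segment_eq_uIcc]
  constructor
  · rintro ⟨s, t, hs, ht, hst, rfl⟩
    refine ⟨⟨s, t, hs, ht, hst, rfl⟩, ?_⟩
    simp [Prod.smul_mk, Prod.mk_add_mk]
    linear_combination y * hst
  · rintro ⟨⟨s, t, hs, ht, hst, hx⟩, hy⟩
    exact ⟨s, t, hs, ht, hst, by
      ext
      · simpa using hx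
      · simp [hy]; linear_combination y * hst⟩

lemma mem_segment_vert {x y₁ y₂ : ℝ} {r : ℝ × ℝ} :
    r ∈ segment ℝ (x, y₁) (x, y₂) ↔ r.1 = x ∧ r.2 ∈ Set.uIcc y₁ y₂ := by
  rw [← segment_eq_uIcc]
  constructor
  · rintro ⟨s, t, hs, ht, hst, rfl⟩
    refine ⟨?_, ⟨s, t, hs, ht, hst, rfl⟩⟩
    simp [Prod.smul_mk, Prod.mk_add_mk]
    linear_combination x * hst
  · rintro ⟨hx, ⟨s, t, hs, ht, hst, hy⟩⟩
    exact ⟨s, t, hs, ht, hst, by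
      ext
      · simp [hx]; linear_combination x * hst
      · simpa using hy⟩

lemma mem_poLeader {p : ℝ × ℝ} {a h : ℝ} {r : ℝ × ℝ} :
    r ∈ poLeader p a h ↔
      (r.1 ∈ Set.uIcc p.1 a ∧ r.2 = p.2) ∨ (r.1 = a ∧ r.2 ∈ Set.uIcc p.2 h) := by
  unfold poLeader
  rw [Set.mem_union]
  constructor
  · rintro (hr | hr)
    · left; exact mem_segment_horiz.mp (by simpa using hr)
    · right; exact mem_segment_vert.mp hr
  · rintro (hr | hr)
    · left; exact (by simpa using mem_segment_horiz.mpr hr : r ∈ segment ℝ p (a, p.2))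
    · right; exact mem_segment_vert.mpr hr

lemma cross_left {x1 h : ℝ} {p q : ℝ × ℝ} (hpq : p.2 < q.2) (hq : q.2 < h)
    (hqx : q.1 < x1) {a b : ℝ} (ha : x1 ≤ a) (hb : x1 ≤ b) :
    (poLeader p a h ∩ poLeader q b h).Nonempty ↔ a ≤ b := by
  have hph : p.2 ≤ h := le_of_lt (hpq.trans hq)
  have huq : Set.uIcc q.2 h = Set.Icc q.2 h := Set.uIcc_of_le hq.le
  have hup : Set.uIcc p.2 h = Set.Icc p.2 h := Set.uIcc_of_le hph
  constructor
  · rintro ⟨r, hr1, hr2⟩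
    rw [mem_poLeader] at hr1 hr2
    rcases hr1 with ⟨_, h1⟩ | ⟨h1, h1'⟩ <;> rcases hr2 with ⟨h2, h2'⟩ | ⟨h2, h2'⟩
    · exact absurd (h1 ▸ h2') (ne_of_lt hpq)
    · rw [huq, Set.mem_Icc, h1] at h2'; linarith
    · -- r.1 = a, r.1 ∈ uIcc q.1 b
      rw [h1, Set.uIcc_of_le (by linarith : q.1 ≤ b), Set.mem_Icc] at h2
      exact h2.2
    · exact le_of_eq (h1.symm.trans h2)
  · intro hab
    refine ⟨(a, q.2), ?_, ?_⟩ <;> rw [mem_poLeader]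
    · right
      exact ⟨rfl, by rw [hup]; exact Set.mem_Icc.mpr ⟨hpq.le, hq.le⟩⟩
    · left
      refine ⟨?_, rfl⟩
      rw [Set.uIcc_of_le (by linarith : q.1 ≤ b)]
      exact Set.mem_Icc.mpr ⟨by linarith, hab⟩

lemma cross_right {xn h : ℝ} {p q : ℝ × ℝ} (hpq : p.2 < q.2) (hq : q.2 < h)
    (hqx : xn < q.1) {a b : ℝ} (ha : a ≤ xn) (hb : b ≤ xn) :
    (poLeader p a h ∩ poLeader q b h).Nonempty ↔ b ≤ a := by
  have hph : p.2 ≤ h := le_of_lt (hpq.trans hq)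
  have huq : Set.uIcc q.2 h = Set.Icc q.2 h := Set.uIcc_of_le hq.le
  have hup : Set.uIcc p.2 h = Set.Icc p.2 h := Set.uIcc_of_le hph
  constructor
  · rintro ⟨r, hr1, hr2⟩
    rw [mem_poLeader] at hr1 hr2
    rcases hr1 with ⟨_, h1⟩ | ⟨h1, h1'⟩ <;> rcases hr2 with ⟨h2, h2'⟩ | ⟨h2, h2'⟩
    · exact absurd (h1 ▸ h2') (ne_of_lt hpq)
    · rw [huq, Set.mem_Icc, h1] at h2'; linarith
    · rw [h1, Set.uIcc_comm, Set.uIcc_of_le (by linarith : b ≤ q.1), Set.mem_Icc] at h2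
      exact h2.1
    · exact le_of_eq (h2.symm.trans h1)
  · intro hab
    refine ⟨(a, q.2), ?_, ?_⟩ <;> rw [mem_poLeader]
    · right
      exact ⟨rfl, by rw [hup]; exact Set.mem_Icc.mpr ⟨hpq.le, hq.le⟩⟩
    · left
      refine ⟨?_, rfl⟩
      rw [Set.uIcc_comm, Set.uIcc_of_le (by linarith : b ≤ q.1)]
      exact Set.mem_Icc.mpr ⟨hab, by linarith⟩

/-- for a pair of sites with distinct heights that is geometry free for
po-leaders (neither lies in the other's po-area), the po-leaders cross iff the relative
left-to-right order of their leaf positions disagrees with a fixed order determined only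
by the sites, independent of the exact leaf positions. -/
theorem poLeader_geometryFree_crossing
    (x1 xn h : ℝ) (pi pj : ℝ × ℝ)
    (hy : pi.2 ≠ pj.2) (hpi : pi.2 < h) (hpj : pj.2 < h)
    (hfree₁ : pj ∉ poArea pi x1 xn h) (hfree₂ : pi ∉ poArea pj x1 xn h) :
    ∃ o : Bool, ∀ a b : ℝ, a ≠ b → a ∈ Set.Icc x1 xn → b ∈ Set.Icc x1 xn →
      ((poLeader pi a h ∩ poLeader pj b h).Nonempty ↔ (if o then b < a else a < b)) := by
  rcases lt_or_gt_of_ne hy with hij | hij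
  · -- pi below pj; pj horizontally outside [x1, xn]
    have hx : pj.1 < x1 ∨ xn < pj.1 := by
      by_contra hc
      push_neg at hc
      exact hfree₁ ⟨hc.1, hc.2, hij.le, hpj.le⟩
    rcases hx with hx | hx
    · refine ⟨false, fun a b hab ha hb => ?_⟩
      simp only [if_neg Bool.false_ne_true, Bool.false_eq_true, if_false]
      rw [cross_left hij hpj hx ha.1 hb.1]
      exact ⟨fun h' => lt_of_le_of_ne h' hab, le_of_lt⟩
    · refine ⟨true, fun a b hab ha hb => ?_⟩
      simp only [if_pos, if_true]
      rw [cross_right hij hpj hx ha.2 hb.2]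
      exact ⟨fun h' => lt_of_le_of_ne h' hab.symm, le_of_lt⟩
  · -- pj below pi; pi horizontally outside [x1, xn]
    have hx : pi.1 < x1 ∨ xn < pi.1 := by
      by_contra hc
      push_neg at hc
      exact hfree₂ ⟨hc.1, hc.2, hij.le, hpi.le⟩
    rcases hx with hx | hx
    · refine ⟨true, fun a b hab ha hb => ?_⟩
      simp only [if_true]
      rw [Set.inter_comm, cross_left hij hpi hx hb.1 ha.1]
      exact ⟨fun h' => lt_of_le_of_ne h' hab.symm, le_of_lt⟩
    · refine ⟨false, fun a b hab ha hb => ?_⟩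
      simp only [Bool.false_eq_true, if_false]
      rw [Set.inter_comm, cross_right hij hpi hx hb.2 ha.2]
      exact ⟨fun h' => lt_of_le_of_ne h' hab, le_of_lt⟩
end

section
/- In the NP-hardness construction, an edge gadget for edge v_i v_j contributes exactly 1 leader crossing if v_i and v_j are on opposite sides of the partition (leaf order ji', ij, ij', ji with ji' and ij left of center up to reversal), and exactly 2 crossings if they are on the same side (leaf order ij, ji, ij', ji' up to reversal). -/
/-! Two leaders from sites `(0, p)` and `(0, q)`, `p < q ≤ H`, to leaves `(u, H)` and `(v, H)`
cross exactly when the lower site's leaf `u` lies between the axis and the upper site's leaf `v`,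
i.e. when `u * (u - v) ≤ 0`. So leaders to opposite sides never cross, and two leaders to the same
side cross iff the lower site goes to the inner leaf. In the first configuration only `ij`–`ji'`
nest this way; in the second, `ij`–`ji` and `ij'`–`ji'`. -/

/-  Number of crossings among the four leaders of an edge gadget: the four sites lie on
the central vertical axis `x = 0` at heights `y 0 < y 1 < y 2 < y 3` (sites `ij`, `ji`,
`ij'`, `ji'` from bottom to top) and the leader of site `k` is the straight segment to
the leaf point `(a k, h)` on the horizontal leaf line at height `h`. -/
open Classical in
noncomputable def quadCross (y : Fin 4 → ℝ) (h : ℝ) (a : Fin 4 → ℝ) : ℕ :=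
  ((Finset.univ ×ˢ Finset.univ).filter fun ij : Fin 4 × Fin 4 =>
    ij.1 < ij.2 ∧
      (segment ℝ (((0 : ℝ), y ij.1) : ℝ × ℝ) (a ij.1, h) ∩
        segment ℝ (((0 : ℝ), y ij.2) : ℝ × ℝ) (a ij.2, h)).Nonempty).card

lemma mem_segment_axis_iff {p H u : ℝ} {z : ℝ × ℝ} :
    z ∈ segment ℝ ((0 : ℝ), p) (u, H) ↔ ∃ t ∈ Set.Icc (0 : ℝ) 1, z = (t * u, p + t * (H - p)) := by
  simp [segment_eq_image', eq_comm (a := z)]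

theorem segment_axis_inter_nonempty_iff {p q H u v : ℝ} (hpq : p < q) (hqH : q ≤ H) :
    (segment ℝ ((0 : ℝ), p) (u, H) ∩ segment ℝ ((0 : ℝ), q) (v, H)).Nonempty ↔
      u * (u - v) ≤ 0 := by
  simp only [Set.Nonempty, Set.mem_inter_iff, mem_segment_axis_iff]
  constructor
  · rintro ⟨z, ⟨t, ⟨ht₀, ht₁⟩, rfl⟩, ⟨s, ⟨hs₀, hs₁⟩, hz⟩⟩
    obtain ⟨hx, hy⟩ := Prod.ext_iff.1 hz
    dsimp only at hx hy
    -- heights: `(1 - t) (H - p) = (1 - s) (H - q)` forces `s ≤ t` and `0 < t`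
    have hst : s ≤ t := by nlinarith
    have ht : 0 < t := by nlinarith
    have key : t ^ 2 * (u * (u - v)) = s * v ^ 2 * (s - t) := by
      linear_combination (t * u - t * v + s * v) * hx
    have hrhs : s * v ^ 2 * (s - t) ≤ 0 :=
      mul_nonpos_of_nonneg_of_nonpos (by positivity) (by linarith)
    nlinarith [pow_pos ht 2]
  · intro huv
    by_cases hu : u = 0
    · subst hu
      have hHp : 0 < H - p := by linarith
      refine ⟨(0, q), ⟨(q - p) / (H - p), ⟨by positivity, ?_⟩, ?_⟩, ⟨0, ⟨le_rfl, zero_le_one⟩, ?_⟩⟩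
      · rw [div_le_one hHp]; linarith
      · exact Prod.ext (by simp) (by field_simp; ring)
      · simp
    · -- `E = u * (v (H - p) - u (H - q))`; multiplying the natural denominator by `u` makes it positive
      set E := u * v * (H - p) - u ^ 2 * (H - q)
      have hu2 : 0 < u ^ 2 := by positivity
      have hE : 0 < E := by nlinarith
      refine ⟨_, ⟨u * v * (q - p) / E, ⟨?_, ?_⟩, rfl⟩, ⟨u ^ 2 * (q - p) / E, ⟨?_, ?_⟩, ?_⟩⟩
      · apply div_nonneg _ hE.le; nlinarith
      · rw [div_le_one hE]; nlinarith
      · positivity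
      · rw [div_le_one hE]; nlinarith
      · exact Prod.ext (by field_simp) (by field_simp; ring)

theorem quadCross_eq_card {y : Fin 4 → ℝ} {h : ℝ} (hy : StrictMono y) (hh : y 3 ≤ h)
    (a : Fin 4 → ℝ) :
    quadCross y h a = ((Finset.univ ×ˢ Finset.univ).filter fun ij : Fin 4 × Fin 4 =>
      ij.1 < ij.2 ∧ a ij.1 * (a ij.1 - a ij.2) ≤ 0).card := by
  classical
  unfold quadCross
  congr 1
  exact Finset.filter_congr fun ij _ => and_congr_right fun hij =>
    segment_axis_inter_nonempty_iff (hy hij) ((hy.monotone (Fin.le_last ij.2)).trans hh)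

/-- crossing counts of the edge gadget of the NP-hardness construction.
If the two endpoints of the edge are on opposite sides of the partition (leaf order
`ji', ij` left of the center, `ij', ji` right of it), the gadget induces exactly 1
crossing; if they are on the same side (leaf order pattern `ji, ij` left, `ij', ji'`
right), it induces exactly 2 crossings. -/
theorem edgeGadget_crossings
    (y : Fin 4 → ℝ) (h : ℝ) (hy : StrictMono y) (hh : y 3 < h) (a : Fin 4 → ℝ) :
    ((a 3 < a 0 ∧ a 0 < 0 ∧ 0 < a 2 ∧ a 2 < a 1) → quadCross y h a = 1) ∧
    ((a 1 < a 0 ∧ a 0 < 0 ∧ 0 < a 2 ∧ a 2 < a 3) → quadCross y h a = 2) := by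
  rw [quadCross_eq_card hy hh.le]
  constructor
  · rintro ⟨h30, h0, h2, h21⟩
    rw [Finset.card_eq_one]
    refine ⟨(0, 3), ?_⟩
    ext ⟨i, j⟩
    fin_cases i <;> fin_cases j <;> simp <;> nlinarith
  · rintro ⟨h10, h0, h2, h23⟩
    rw [Finset.card_eq_two]
    refine ⟨(0, 1), (2, 3), by decide, ?_⟩
    ext ⟨i, j⟩
    fin_cases i <;> fin_cases j <;> simp <;> nlinarith
end
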